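/- arXiv:2506.18386 — 2 statements merged into one kernel-verified Lean document; each statement's English description precedes it below -/
import Mathlib

section
/- Let θ : ℕ → ℕ be strictly increasing, V : ℝⁿ → ℝ and let H : ℝⁿ × ℕ → ℝ satisfy the looping condition H(η(θ(j+1)), θ(j+1)) = H(η(θ(j)), θ(j)) for all j, where η : ℕ → ℝⁿ is a trajectory. Define 𝒱(k) = V(η(k)) + H(η(k), k). If 𝒱(k+1) - 𝒱(k) < 0 for all k with θ(j) ≤ k < θ(j+1), then V(η(θ(j+1))) - V(η(θ(j))) < 0. -/
/-- Forward direction of the looped-function lemma: if the combined function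
𝒱 = V + H strictly decreases at each step and H satisfies the looping
condition, then V strictly decreases between consecutive sampling instants. -/
theorem stmt_3 (n : ℕ) (θ : ℕ → ℕ) (hθ : StrictMono θ)
    (V : (Fin n → ℝ) → ℝ) (H : (Fin n → ℝ) → ℕ → ℝ) (η : ℕ → Fin n → ℝ)
    (hloop : ∀ j, H (η (θ (j + 1))) (θ (j + 1)) = H (η (θ j)) (θ j))
    (𝒱 : ℕ → ℝ) (h𝒱 : ∀ k, 𝒱 k = V (η k) + H (η k) k)
    (j : ℕ)
    (hdec : ∀ k, θ j ≤ k → k < θ (j + 1) → 𝒱 (k + 1) - 𝒱 k < 0) :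
    V (η (θ (j + 1))) - V (η (θ j)) < 0 := by
  have key : ∀ m, θ j < m → m ≤ θ (j + 1) → 𝒱 m < 𝒱 (θ j) := by
    intro m
    induction m with
    | zero => omega
    | succ k ih =>
      intro h1 h2
      have hk1 : θ j ≤ k := by omega
      have hk2 : k < θ (j + 1) := by omega
      have := hdec k hk1 hk2
      rcases eq_or_lt_of_le hk1 with he | hl
      · subst he; linarith
      · have := ih hl (le_of_lt hk2); linarith
  have h := key (θ (j + 1)) (hθ (Nat.lt_succ_self j)) le_rfl
  rw [h𝒱, h𝒱, hloop] at h
  linarith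
end

section
/- Let Θ(ν) := ν - sin(ν) for ν ∈ ℝ. Then for every ν ∈ [-φ̄, φ̄] with 0 < φ̄ ≤ π, Θ satisfies the sector bound Sec[0, l_s] with l_s = (φ̄ - sin φ̄)/φ̄, i.e., 0 ≤ ν·Θ(ν) ≤ l_s·ν² for all ν ∈ [-φ̄, φ̄]. -/
/-!
Since `x * (x - sin x) = x ^ 2 * g x` with `g x = (x - sin x) / x`, and `g` is even, the sector
bound amounts to `0 ≤ g |ν| ≤ g φ̄`. Now `g x` is the slope of the chord from `0` to `x` of
`x ↦ x - sin x`, which vanishes at `0` and is convex on `[0, π]`; so `g` is nonnegative and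
nondecreasing there.
-/

open Real Set

namespace Real

lemma convexOn_sub_sin_Icc : ConvexOn ℝ (Icc 0 π) (fun x => x - sin x) :=
  (convexOn_id (convex_Icc 0 π)).sub strictConcaveOn_sin_Icc.concaveOn

lemma sub_sin_div_self_nonneg {x : ℝ} (hx : 0 ≤ x) : 0 ≤ (x - sin x) / x :=
  div_nonneg (sub_nonneg.2 (sin_le hx)) hx

lemma monotoneOn_sub_sin_div_self : MonotoneOn (fun x => (x - sin x) / x) (Icc 0 π) := by
  intro x hx y hy hxy
  rcases hx.1.eq_or_lt with rfl | hx₀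
  · simpa using sub_sin_div_self_nonneg hy.1
  simpa using convexOn_sub_sin_Icc.secant_mono (left_mem_Icc.2 pi_pos.le) hx hy
    hx₀.ne' (hx₀.trans_le hxy).ne' hxy

lemma mul_sub_sin_eq_sq_mul (x : ℝ) :
    x * (x - sin x) = x ^ 2 * ((|x| - sin |x|) / |x|) := by
  rcases eq_or_ne x 0 with rfl | hx
  · simp
  rcases abs_choice x with h | h <;> rw [h]
  · field_simp
  · rw [sin_neg]
    field_simp
    ring

end Real

theorem stmt_8_general (φbar : ℝ) (hπ : φbar ≤ Real.pi)
    (ν : ℝ) (hν : ν ∈ Set.Icc (-φbar) φbar) :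
    0 ≤ ν * (ν - Real.sin ν) ∧
    ν * (ν - Real.sin ν) ≤ ((φbar - Real.sin φbar) / φbar) * ν ^ 2 := by
  have habs : |ν| ≤ φbar := abs_le.2 hν
  have hν' : |ν| ∈ Icc 0 π := ⟨abs_nonneg ν, habs.trans hπ⟩
  have hφ : φbar ∈ Icc 0 π := ⟨(abs_nonneg ν).trans habs, hπ⟩
  rw [mul_sub_sin_eq_sq_mul, mul_comm _ (ν ^ 2)]
  exact ⟨mul_nonneg (sq_nonneg ν) (sub_sin_div_self_nonneg hν'.1),
    mul_le_mul_of_nonneg_left (monotoneOn_sub_sin_div_self hν' hφ habs) (sq_nonneg ν)⟩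

/-- Sector bound Sec[0, l_s] for the inverted-pendulum uncertainty
Θ(ν) = ν - sin ν on [-φ̄, φ̄], with l_s = (φ̄ - sin φ̄)/φ̄. -/
theorem stmt_8 (φbar : ℝ) (h0 : 0 < φbar) (hπ : φbar ≤ Real.pi)
    (ν : ℝ) (hν : ν ∈ Set.Icc (-φbar) φbar) :
    0 ≤ ν * (ν - Real.sin ν) ∧
    ν * (ν - Real.sin ν) ≤ ((φbar - Real.sin φbar) / φbar) * ν ^ 2 :=
  stmt_8_general φbar hπ ν hν
end
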